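/- Let v₁, …, v₁₃ be the vectors in ℝ³ given by v₁=(1,0,0), v₂=(0,1,0), v₃=(0,0,1), v₄=(0,1,1), v₅=(0,1,−1), v₆=(1,0,1), v₇=(1,0,−1), v₈=(1,1,0), v₉=(1,−1,0), v₁₀=(1,1,1), v₁₁=(−1,1,1), v₁₂=(1,−1,1), v₁₃=(1,1,−1), and let YO³₁₃ be the simple graph on Fin 13 in which distinct i, j are adjacent iff the dot product of vᵢ and vⱼ is 0. Then: (a) the chromatic number of YO³₁₃ equals 4; and (b) any two distinct vertices of YO³₁₃ are adjacent or have a common neighbor, i.e. YO³₁₃ has diameter at most 2 (and it is not complete, so its diameter is exactly 2). -/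

import Mathlib

/-- The orthogonality graph of a finite list of vectors in `ℝ^d`: distinct indices
are adjacent iff the corresponding vectors have dot product `0`. -/
def orthoGraph {m d : ℕ} (v : Fin m → Fin d → ℝ) : SimpleGraph (Fin m) where
  Adj i j := i ≠ j ∧ ∑ a, v i a * v j a = 0
  symm := by
    constructor
    rintro i j ⟨hne, hdot⟩
    refine ⟨hne.symm, ?_⟩
    rw [Finset.sum_congr rfl fun a _ => mul_comm (v j a) (v i a)]
    exact hdot
  loopless := by constructor; rintro i ⟨h, -⟩; exact h rfl

/-- The 13 vectors of the Yu–Oh state-independent contextuality proof in `ℝ³`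
(index `i : Fin 13` corresponds to `v_{i+1}`). -/
def yuOhVecs : Fin 13 → Fin 3 → ℝ :=
  ![![1, 0, 0], ![0, 1, 0], ![0, 0, 1], ![0, 1, 1], ![0, 1, -1], ![1, 0, 1],
    ![1, 0, -1], ![1, 1, 0], ![1, -1, 0], ![1, 1, 1], ![-1, 1, 1], ![1, -1, 1],
    ![1, 1, -1]]

/-!
In a 3-colouring, the triangles `{v₁, v₂, v₃}`, `{v₁, v₄, v₅}`, `{v₂, v₆, v₇}`, `{v₃, v₈, v₉}` force
the pairs `{v₄, v₅}`, `{v₆, v₇}`, `{v₈, v₉}` to carry the two colours missing at `v₁`, `v₂`, `v₃`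
respectively. Each of `v₁₀, …, v₁₃` is orthogonal to one vector from each pair, and however the
pairs are coloured, one of these four vertices sees all three colours. Everything else is a finite
check, made decidable by passing to integer coordinates.
-/

namespace SimpleGraph

variable {V : Type*} {G : SimpleGraph V}

theorem Coloring.false_of_adj_three_colors (C : G.Coloring (Fin 3)) {v a b c : V}
    (ha : G.Adj v a) (hb : G.Adj v b) (hc : G.Adj v c)
    (hab : C a ≠ C b) (hac : C a ≠ C c) (hbc : C b ≠ C c) : False := by
  have hva := C.valid ha
  have hvb := C.valid hb
  have hvc := C.valid hc
  omega

theorem ediam_eq_two_of_forall_adj_or_exists_adj_adj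
    (h : ∀ u v, u ≠ v → G.Adj u v ∨ ∃ w, G.Adj u w ∧ G.Adj w v)
    {u v : V} (huv : u ≠ v) (hnadj : ¬ G.Adj u v) : G.ediam = 2 := by
  refine le_antisymm (ediam_le_of_edist_le fun x y => ?_) ?_
  · by_contra! hlt
    obtain ⟨hxy, hnxy, hempty⟩ := two_lt_edist_iff.mp hlt
    obtain ⟨w, hxw, hwy⟩ := (h x y hxy).resolve_left hnxy
    have : w ∈ G.commonNeighbors x y := (G.mem_commonNeighbors).mpr ⟨hxw, hwy.symm⟩
    simp_all
  · obtain ⟨w, huw, hwv⟩ := (h u v huv).resolve_left hnadj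
    have hdist : G.edist u v = 2 :=
      edist_eq_two_iff.mpr ⟨huv, hnadj, w, (G.mem_commonNeighbors).mpr ⟨huw, hwv.symm⟩⟩
    exact hdist ▸ edist_le_ediam

end SimpleGraph

theorem orthoGraph_intCast_adj_iff {m d : ℕ} (w : Fin m → Fin d → ℤ) (i j : Fin m) :
    (orthoGraph fun k a => (w k a : ℝ)).Adj i j ↔ i ≠ j ∧ ∑ a, w i a * w j a = 0 := by
  show i ≠ j ∧ _ ↔ _
  push_cast
  exact_mod_cast Iff.rfl

def yuOhIntVecs : Fin 13 → Fin 3 → ℤ :=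
  ![![1, 0, 0], ![0, 1, 0], ![0, 0, 1], ![0, 1, 1], ![0, 1, -1], ![1, 0, 1],
    ![1, 0, -1], ![1, 1, 0], ![1, -1, 0], ![1, 1, 1], ![-1, 1, 1], ![1, -1, 1],
    ![1, 1, -1]]

theorem yuOhVecs_eq_intCast : yuOhVecs = fun i a => (yuOhIntVecs i a : ℝ) := by
  ext i a
  fin_cases i <;> fin_cases a <;> simp [yuOhVecs, yuOhIntVecs]

theorem yuOh_adj_iff (i j : Fin 13) :
    (orthoGraph yuOhVecs).Adj i j ↔ i ≠ j ∧ ∑ a, yuOhIntVecs i a * yuOhIntVecs j a = 0 := by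
  rw [yuOhVecs_eq_intCast]
  exact orthoGraph_intCast_adj_iff yuOhIntVecs i j

instance : DecidableRel (orthoGraph yuOhVecs).Adj :=
  fun i j => decidable_of_iff _ (yuOh_adj_iff i j).symm

theorem yuOh_colorable_four : (orthoGraph yuOhVecs).Colorable 4 :=
  ⟨.mk ![0, 1, 2, 1, 2, 0, 2, 0, 1, 0, 1, 3, 2] (by decide)⟩

theorem exists_rainbow_of_triangles (c₀ c₁ c₂ c₃ c₄ c₅ c₆ c₇ c₈ : Fin 3)
    (h₀₁ : c₀ ≠ c₁) (h₀₂ : c₀ ≠ c₂) (h₁₂ : c₁ ≠ c₂) (h₀₃ : c₀ ≠ c₃) (h₀₄ : c₀ ≠ c₄)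
    (h₃₄ : c₃ ≠ c₄) (h₁₅ : c₁ ≠ c₅) (h₁₆ : c₁ ≠ c₆) (h₅₆ : c₅ ≠ c₆) (h₂₇ : c₂ ≠ c₇)
    (h₂₈ : c₂ ≠ c₈) (h₇₈ : c₇ ≠ c₈) :
    (c₄ ≠ c₆ ∧ c₄ ≠ c₈ ∧ c₆ ≠ c₈) ∨ (c₄ ≠ c₅ ∧ c₄ ≠ c₇ ∧ c₅ ≠ c₇) ∨
      (c₃ ≠ c₆ ∧ c₃ ≠ c₇ ∧ c₆ ≠ c₇) ∨ (c₃ ≠ c₅ ∧ c₃ ≠ c₈ ∧ c₅ ≠ c₈) := by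
  omega

theorem yuOh_not_colorable_three : ¬ (orthoGraph yuOhVecs).Colorable 3 := by
  rintro ⟨C⟩
  have hC : ∀ i j, (orthoGraph yuOhVecs).Adj i j → C i ≠ C j := fun _ _ => C.valid
  rcases exists_rainbow_of_triangles (C 0) (C 1) (C 2) (C 3) (C 4) (C 5) (C 6) (C 7) (C 8)
      (hC 0 1 (by decide)) (hC 0 2 (by decide)) (hC 1 2 (by decide)) (hC 0 3 (by decide))
      (hC 0 4 (by decide)) (hC 3 4 (by decide)) (hC 1 5 (by decide)) (hC 1 6 (by decide))
      (hC 5 6 (by decide)) (hC 2 7 (by decide)) (hC 2 8 (by decide)) (hC 7 8 (by decide))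
    with h | h | h | h
  · exact C.false_of_adj_three_colors (v := 9) (by decide) (by decide) (by decide) h.1 h.2.1 h.2.2
  · exact C.false_of_adj_three_colors (v := 10) (by decide) (by decide) (by decide) h.1 h.2.1 h.2.2
  · exact C.false_of_adj_three_colors (v := 11) (by decide) (by decide) (by decide) h.1 h.2.1 h.2.2
  · exact C.false_of_adj_three_colors (v := 12) (by decide) (by decide) (by decide) h.1 h.2.1 h.2.2

/-- The orthogonality graph `YO³₁₃` of the 13 Yu–Oh vectors has
chromatic number `4`; any two distinct vertices are adjacent or share a common
neighbor (diameter at most 2); and the graph is not complete (so its diameter is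
exactly 2). -/
theorem stmt_12 :
    (orthoGraph yuOhVecs).chromaticNumber = 4 ∧
    (∀ i j : Fin 13, i ≠ j →
      ((orthoGraph yuOhVecs).Adj i j ∨
        ∃ k : Fin 13, (orthoGraph yuOhVecs).Adj i k ∧ (orthoGraph yuOhVecs).Adj k j)) ∧
    (∃ i j : Fin 13, i ≠ j ∧ ¬ (orthoGraph yuOhVecs).Adj i j) ∧
    (orthoGraph yuOhVecs).ediam = 2 := by
  have hdist : ∀ i j : Fin 13, i ≠ j →
      ((orthoGraph yuOhVecs).Adj i j ∨
        ∃ k : Fin 13, (orthoGraph yuOhVecs).Adj i k ∧ (orthoGraph yuOhVecs).Adj k j) := by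
    decide
  have hnadj : ¬ (orthoGraph yuOhVecs).Adj 0 5 := by decide
  refine ⟨?_, hdist, ⟨0, 5, by decide, hnadj⟩,
    SimpleGraph.ediam_eq_two_of_forall_adj_or_exists_adj_adj hdist (by decide) hnadj⟩
  exact SimpleGraph.chromaticNumber_eq_iff_colorable_not_colorable.mpr
    ⟨yuOh_colorable_four, yuOh_not_colorable_three⟩
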